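/- Let M ≥ 2 and a, b ∈ finitely supported sequences ℤ → ℂ with ã(z) = (1+z+⋯+z^{M−1})^J b̃(z) for some J ∈ ℕ. Define A_n and B_n by Ã_n(z) = ã(z^{M^{n−1}}) ⋯ ã(z), B̃_n(z) = b̃(z^{M^{n−1}}) ⋯ b̃(z). Then for every finitely supported u and every n ≥ 1, the symbol identity (1−z)^J Ã_n(z) ũ(z) = (1 − z^{M^n})^J B̃_n(z) ũ(z) holds; consequently ‖∇^J(A_n * u)‖_{ℓ_∞} ≤ 2^J ‖B_n * u‖_{ℓ_∞}, where ∇ is the backward difference (∇v)(k) = v(k) − v(k−1). -/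

import Mathlib

/-- The symbol `ã(z) = ∑_k a(k) z^k` of a sequence, as a Laurent polynomial. -/
noncomputable def symb (a : ℤ → ℂ) : LaurentPolynomial ℂ :=
  ∑ᶠ k : ℤ, LaurentPolynomial.C (a k) * LaurentPolynomial.T k

/-- Convolution of sequences: `(u * v)(j) = ∑_k u(k) v(j - k)`. -/
noncomputable def conv (u v : ℤ → ℂ) : ℤ → ℂ := fun j => ∑ᶠ k : ℤ, u k * v (j - k)

/-- The iterated masks with symbols `Ã_n(z) = ã(z^{M^{n-1}}) ⋯ ã(z^M) ã(z)`. -/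
noncomputable def maskIter (M : ℕ) (a : ℤ → ℂ) : ℕ → ℤ → ℂ
  | 0 => fun j => if j = 0 then 1 else 0
  | n + 1 => fun j => ∑ᶠ k : ℤ, a k * maskIter M a n (j - (M : ℤ) ^ n * k)

/-- Backward difference `(∇v)(k) = v(k) - v(k-1)`. -/
def bdiff (v : ℤ → ℂ) : ℤ → ℂ := fun k => v k - v (k - 1)

/-!
Since `(1 - z)(1 + z + ⋯ + z^{M-1}) = 1 - z^M`, substituting `z^{M^i}` and multiplying over
`i < n` telescopes to `(1 - z) ∏_{i<n} G(z^{M^i}) = 1 - z^{M^n}` for `G(z) = 1 + ⋯ + z^{M-1}`;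
raising to the `J`-th power and inserting `ã = G^J b̃` factor by factor gives the symbol identity.
Symbols are injective on finitely supported sequences, turn convolution into multiplication and
the step-`c` backward difference into multiplication by `1 - z^c`. Hence `∇^J (A_n * u)` is the
`J`-fold step-`M^n` backward difference of `B_n * u`, and each difference at most doubles the
sup norm.
-/

open Function LaurentPolynomial Finset

namespace LaurentPolynomial

section Semiring

variable {R : Type*} [Semiring R]

noncomputable def expand (c : ℤ) : R[T;T⁻¹] →+* R[T;T⁻¹] :=
  AddMonoidAlgebra.mapDomainRingHom R (AddMonoidHom.mulLeft c)

@[simp]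
lemma expand_C_mul_T (c n : ℤ) (r : R) : expand c (C r * T n) = C r * T (c * n) := by
  simp [expand, ← single_eq_C_mul_T]

@[simp]
lemma expand_T (c n : ℤ) : expand c (T n : R[T;T⁻¹]) = T (c * n) := by
  simpa using expand_C_mul_T c n (1 : R)

@[simp]
lemma expand_one (p : R[T;T⁻¹]) : expand 1 p = p := by
  have : AddMonoidHom.mulLeft (1 : ℤ) = AddMonoidHom.id ℤ := by ext; simp
  simp [expand, this]

end Semiring

section CommRing

variable {R : Type*} [CommRing R]

lemma one_sub_T_mul_sum_T (M : ℕ) :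
    (1 - T 1 : R[T;T⁻¹]) * ∑ i ∈ range M, T (i : ℤ) = 1 - T M := by
  simpa [T_pow] using mul_neg_geom_sum (T 1 : R[T;T⁻¹]) M

lemma one_sub_T_mul_prod_expand_sum_T (M n : ℕ) :
    (1 - T 1 : R[T;T⁻¹]) * ∏ i ∈ range n, expand ((M : ℤ) ^ i) (∑ j ∈ range M, T (j : ℤ))
      = 1 - T ((M : ℤ) ^ n) := by
  induction n with
  | zero => simp
  | succ n ih =>
    have h := congrArg (expand ((M : ℤ) ^ n)) (one_sub_T_mul_sum_T (R := R) M)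
    rw [map_mul, map_sub, map_sub, map_one, expand_T, mul_one, expand_T] at h
    rw [prod_range_succ, ← mul_assoc, ih, h, pow_succ]

end CommRing

end LaurentPolynomial

lemma hasFiniteSupport_symb_term {a : ℤ → ℂ} (ha : a.HasFiniteSupport) :
    (fun k ↦ C (a k) * T k).HasFiniteSupport := by
  fun_prop (disch := simp)

lemma symb_eq_sum {a : ℤ → ℂ} {s : Finset ℤ} (hs : support a ⊆ s) :
    symb a = ∑ k ∈ s, C (a k) * T k :=
  finsum_eq_finsetSum_of_support_subset _ fun k hk ↦ hs fun hak ↦ hk (by simp [hak])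

lemma coeff_symb {a : ℤ → ℂ} (ha : a.HasFiniteSupport) (m : ℤ) : (symb a).coeff m = a m := by
  rw [symb_eq_sum (Set.Finite.coe_toFinset ha).ge]
  simp only [← single_eq_C_mul_T, AddMonoidAlgebra.coeff_sum, AddMonoidAlgebra.coeff_single,
    Finsupp.finsetSum_apply, Finsupp.single_apply, Finset.sum_ite_eq']
  split_ifs with h
  · rfl
  · exact (notMem_support.mp (mt (Set.Finite.mem_toFinset ha).mpr h)).symm

lemma eq_of_symb_eq {a b : ℤ → ℂ} (ha : a.HasFiniteSupport) (hb : b.HasFiniteSupport)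
    (h : symb a = symb b) : a = b :=
  funext fun m ↦ by rw [← coeff_symb ha, ← coeff_symb hb, h]

lemma symb_sub {f g : ℤ → ℂ} (hf : f.HasFiniteSupport) (hg : g.HasFiniteSupport) :
    symb (fun k ↦ f k - g k) = symb f - symb g := by
  simp only [symb, map_sub, sub_mul]
  exact finsum_sub_distrib (hasFiniteSupport_symb_term hf) (hasFiniteSupport_symb_term hg)

lemma symb_comp_sub (v : ℤ → ℂ) (c : ℤ) : symb (fun j ↦ v (j - c)) = T c * symb v := by
  rw [symb, symb, mul_finsum,
    ← finsum_comp_equiv (Equiv.addRight c) (f := fun j ↦ C (v (j - c)) * T j)]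
  refine finsum_congr fun k ↦ ?_
  rw [Equiv.coe_addRight, add_sub_cancel_right, T_add]
  ring

lemma symb_const_mul (x : ℂ) (v : ℤ → ℂ) : symb (fun j ↦ x * v j) = C x * symb v := by
  simp [symb, mul_finsum, mul_assoc]

lemma symb_sum {ι : Type*} (s : Finset ι) {F : ι → ℤ → ℂ} (hF : ∀ i ∈ s, (F i).HasFiniteSupport) :
    symb (fun j ↦ ∑ i ∈ s, F i j) = ∑ i ∈ s, symb (F i) := by
  simp only [symb, map_sum, sum_mul]
  exact finsum_sum_comm s _ fun i hi ↦ hasFiniteSupport_symb_term (hF i hi)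

/-- `dilatedConv c a v` is the convolution of `v` with `a` upsampled by the factor `c`. -/
noncomputable def dilatedConv (c : ℤ) (a v : ℤ → ℂ) : ℤ → ℂ := fun j ↦ ∑ᶠ k, a k * v (j - c * k)

section dilatedConv

variable {a v : ℤ → ℂ}

lemma dilatedConv_eq_sum (c : ℤ) (ha : a.HasFiniteSupport) :
    dilatedConv c a v = fun j ↦ ∑ k ∈ Set.Finite.toFinset ha, a k * v (j - c * k) :=
  funext fun _ ↦ finsum_eq_finsetSum_of_support_subset _ fun k hk ↦
    (Set.Finite.mem_toFinset ha).mpr fun hak ↦ hk (by simp [hak])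

lemma hasFiniteSupport_dilatedConv (c : ℤ) (ha : a.HasFiniteSupport) (hv : v.HasFiniteSupport) :
    (dilatedConv c a v).HasFiniteSupport := by
  rw [dilatedConv_eq_sum c ha]
  fun_prop (disch := exact sub_left_injective)

lemma symb_dilatedConv (c : ℤ) (ha : a.HasFiniteSupport) (hv : v.HasFiniteSupport) :
    symb (dilatedConv c a v) = expand c (symb a) * symb v := by
  rw [dilatedConv_eq_sum c ha, symb_sum _ fun k _ ↦ by fun_prop (disch := exact sub_left_injective),
    symb_eq_sum (Set.Finite.coe_toFinset ha).ge, map_sum, sum_mul]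
  refine sum_congr rfl fun k _ ↦ ?_
  rw [symb_const_mul, symb_comp_sub, expand_C_mul_T, mul_assoc]

end dilatedConv

lemma conv_eq_dilatedConv_one : conv = dilatedConv 1 := by
  ext u v j
  simp [conv, dilatedConv]

lemma symb_conv {u v : ℤ → ℂ} (hu : u.HasFiniteSupport) (hv : v.HasFiniteSupport) :
    symb (conv u v) = symb u * symb v := by
  rw [conv_eq_dilatedConv_one, symb_dilatedConv 1 hu hv, expand_one]

lemma hasFiniteSupport_conv {u v : ℤ → ℂ} (hu : u.HasFiniteSupport) (hv : v.HasFiniteSupport) :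
    (conv u v).HasFiniteSupport := by
  rw [conv_eq_dilatedConv_one]
  exact hasFiniteSupport_dilatedConv 1 hu hv

section maskIter

variable (M : ℕ) {a : ℤ → ℂ}

lemma maskIter_succ (n : ℕ) :
    maskIter M a (n + 1) = dilatedConv ((M : ℤ) ^ n) a (maskIter M a n) :=
  rfl

lemma hasFiniteSupport_maskIter (ha : a.HasFiniteSupport) (n : ℕ) :
    (maskIter M a n).HasFiniteSupport := by
  induction n with
  | zero =>
    refine (Set.finite_singleton 0).subset fun j hj ↦ ?_
    by_contra h
    simp_all [maskIter]
  | succ n ih => exact hasFiniteSupport_dilatedConv _ ha ih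

lemma symb_maskIter (ha : a.HasFiniteSupport) (n : ℕ) :
    symb (maskIter M a n) = ∏ i ∈ range n, expand ((M : ℤ) ^ i) (symb a) := by
  induction n with
  | zero =>
    rw [symb_eq_sum (s := {0}) fun j hj ↦ by by_contra h; simp_all [maskIter]]
    simp [maskIter]
  | succ n ih =>
    rw [maskIter_succ, symb_dilatedConv _ ha (hasFiniteSupport_maskIter M ha n), ih,
      prod_range_succ, mul_comm]

end maskIter

lemma one_sub_T_pow_mul_symb_maskIter {M J : ℕ} {a b : ℤ → ℂ} (ha : a.HasFiniteSupport)
    (hb : b.HasFiniteSupport)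
    (hab : symb a = (∑ i ∈ range M, T (i : ℤ)) ^ J * symb b) (n : ℕ) :
    (1 - T 1) ^ J * symb (maskIter M a n) = (1 - T ((M : ℤ) ^ n)) ^ J * symb (maskIter M b n) := by
  rw [symb_maskIter M ha, symb_maskIter M hb, hab]
  simp only [map_mul, map_pow, prod_mul_distrib, prod_pow, ← mul_assoc, ← mul_pow,
    one_sub_T_mul_prod_expand_sum_T]

def bdiffStep {E : Type*} [Sub E] (c : ℤ) (v : ℤ → E) (k : ℤ) : E := v k - v (k - c)

lemma bdiff_eq_bdiffStep_one : bdiff = bdiffStep 1 :=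
  rfl

lemma hasFiniteSupport_bdiffStep_iterate {E : Type*} [AddGroup E] (c : ℤ) (J : ℕ) {v : ℤ → E}
    (hv : v.HasFiniteSupport) : ((bdiffStep c)^[J] v).HasFiniteSupport := by
  induction J with
  | zero => exact hv
  | succ J ih =>
    rw [Function.iterate_succ_apply']
    unfold bdiffStep
    fun_prop (disch := exact sub_left_injective)

lemma symb_bdiffStep (c : ℤ) {v : ℤ → ℂ} (hv : v.HasFiniteSupport) :
    symb (bdiffStep c v) = (1 - T c) * symb v := by
  have hv' : (fun k ↦ v (k - c)).HasFiniteSupport := by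
    fun_prop (disch := exact sub_left_injective)
  rw [show bdiffStep c v = fun k ↦ v k - v (k - c) from rfl, symb_sub hv hv', symb_comp_sub]
  ring

lemma symb_bdiffStep_iterate (c : ℤ) (J : ℕ) {v : ℤ → ℂ} (hv : v.HasFiniteSupport) :
    symb ((bdiffStep c)^[J] v) = (1 - T c) ^ J * symb v := by
  induction J with
  | zero => simp
  | succ J ih =>
    rw [Function.iterate_succ_apply', symb_bdiffStep c (hasFiniteSupport_bdiffStep_iterate c J hv),
      ih, pow_succ']
    ring

lemma bddAbove_range_norm {E : Type*} [SeminormedAddGroup E] {w : ℤ → E}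
    (hw : w.HasFiniteSupport) : BddAbove (Set.range fun k ↦ ‖w k‖) := by
  have hw' : (Set.range w).Finite :=
    ((Set.Finite.image w hw).insert 0).subset (range_subset_insert_image_support w)
  rw [Set.range_comp' norm w]
  exact (hw'.image norm).bddAbove

lemma norm_bdiffStep_iterate_le {E : Type*} [SeminormedAddGroup E] (c : ℤ) (J : ℕ) {w : ℤ → E}
    (hw : BddAbove (Set.range fun k ↦ ‖w k‖)) (m : ℤ) :
    ‖(bdiffStep c)^[J] w m‖ ≤ 2 ^ J * ⨆ k, ‖w k‖ := by
  induction J generalizing m with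
  | zero => simpa using le_ciSup hw m
  | succ J ih =>
    rw [Function.iterate_succ_apply', bdiffStep, pow_succ]
    linarith [norm_sub_le ((bdiffStep c)^[J] w m) ((bdiffStep c)^[J] w (m - c)), ih m, ih (m - c)]

theorem symbol_identity_and_difference_bound_general (M : ℕ) (J : ℕ)
    (a b : ℤ → ℂ) (ha : (Function.support a).Finite)
    (hb : (Function.support b).Finite)
    (hab : symb a = (∑ i ∈ Finset.range M, LaurentPolynomial.T (i : ℤ)) ^ J * symb b) :
    ∀ u : ℤ → ℂ, (Function.support u).Finite → ∀ n : ℕ, 1 ≤ n →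
      ((1 - LaurentPolynomial.T 1) ^ J * symb (conv (maskIter M a n) u)
          = (1 - LaurentPolynomial.T ((M : ℤ) ^ n)) ^ J * symb (conv (maskIter M b n) u)) ∧
        ∀ m : ℤ, ‖bdiff^[J] (conv (maskIter M a n) u) m‖
          ≤ 2 ^ J * ⨆ k : ℤ, ‖conv (maskIter M b n) u k‖ := by
  intro u hu n _
  have hA := hasFiniteSupport_maskIter M ha n
  have hB := hasFiniteSupport_maskIter M hb n
  have hAu := hasFiniteSupport_conv hA hu
  have hBu := hasFiniteSupport_conv hB hu
  have hsymb : (1 - T 1) ^ J * symb (conv (maskIter M a n) u)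
      = (1 - T ((M : ℤ) ^ n)) ^ J * symb (conv (maskIter M b n) u) := by
    rw [symb_conv hA hu, symb_conv hB hu, ← mul_assoc, ← mul_assoc,
      one_sub_T_pow_mul_symb_maskIter ha hb hab]
  refine ⟨hsymb, fun m ↦ ?_⟩
  have hdiff : bdiff^[J] (conv (maskIter M a n) u)
      = (bdiffStep ((M : ℤ) ^ n))^[J] (conv (maskIter M b n) u) := by
    rw [bdiff_eq_bdiffStep_one]
    refine eq_of_symb_eq (hasFiniteSupport_bdiffStep_iterate _ J hAu)
      (hasFiniteSupport_bdiffStep_iterate _ J hBu) ?_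
    rw [symb_bdiffStep_iterate _ J hAu, symb_bdiffStep_iterate _ J hBu, hsymb]
  rw [hdiff]
  exact norm_bdiffStep_iterate_le _ J (bddAbove_range_norm hBu) m

theorem symbol_identity_and_difference_bound (M : ℕ) (hM : 2 ≤ M) (J : ℕ)
    (a b : ℤ → ℂ) (ha : (Function.support a).Finite)
    (hb : (Function.support b).Finite)
    (hab : symb a = (∑ i ∈ Finset.range M, LaurentPolynomial.T (i : ℤ)) ^ J * symb b) :
    ∀ u : ℤ → ℂ, (Function.support u).Finite → ∀ n : ℕ, 1 ≤ n →
      ((1 - LaurentPolynomial.T 1) ^ J * symb (conv (maskIter M a n) u)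
          = (1 - LaurentPolynomial.T ((M : ℤ) ^ n)) ^ J * symb (conv (maskIter M b n) u)) ∧
        ∀ m : ℤ, ‖bdiff^[J] (conv (maskIter M a n) u) m‖
          ≤ 2 ^ J * ⨆ k : ℤ, ‖conv (maskIter M b n) u k‖ :=
  symbol_identity_and_difference_bound_general M J a b ha hb hab
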